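/- arXiv:1409.5621 — 3 statements merged into one kernel-verified Lean document; each statement's English description precedes it below -/
import Mathlib

section
/- If x and y are elements of a (topologically complete, e.g. finite-dimensional nilpotent-completed or formal) Lie algebra satisfying [x, y] = D·y for a scalar D ≠ 0, then the Baker–Campbell–Hausdorff product satisfies log(exp(x)·exp(y)) = x + (D/(1 - e^{-D}))·y. -/
/-!
The relation `x y = y (x + D)` gives `exp (t x) y = e^{tD} y exp (t x)`. Hence
`G t = exp (t x) exp (φ t y)` satisfies `G' = (x + φ' e^{tD} y) G`; choosing `φ` with
`φ' e^{tD} = c := D / (1 - e^{-D})`, `φ 0 = 0` and `φ 1 = 1`, this is the linear equation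
`G' = (x + c y) G`, whose solution with `G 0 = 1` is `exp (t (x + c y))`.
-/

open NormedSpace

section

variable {A : Type*} [NormedRing A] [NormedAlgebra ℝ A] [CompleteSpace A]

theorem exp_mul_eq_smul_mul_exp_of_mul_sub_mul_eq_smul {x y : A} {D : ℝ}
    (h : x * y - y * x = D • y) :
    exp x * y = Real.exp D • (y * exp x) := by
  let +nondep : NormedAlgebra ℚ A := .restrictScalars ℚ ℝ A
  have hsemi : SemiconjBy y (x + algebraMap ℝ A D) x := by
    rw [SemiconjBy, mul_add, ← Algebra.commutes, ← Algebra.smul_def, ← h, add_sub_cancel]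
  rw [← hsemi.exp_right.eq, exp_add_of_commute (Algebra.commutes D x).symm,
    ← algebraMap_exp_comm, Real.exp_eq_exp_ℝ, ← Algebra.commutes,
    Algebra.left_comm, ← Algebra.smul_def]

theorem eq_exp_smul_mul_of_hasDerivAt_mul {G : ℝ → A} {z : A}
    (hG : ∀ t, HasDerivAt G (z * G t) t) (t : ℝ) : G t = exp (t • z) * G 0 := by
  let +nondep : NormedAlgebra ℚ A := .restrictScalars ℚ ℝ A
  have hderiv : ∀ s, HasDerivAt (fun s => exp (s • -z) * G s) 0 s := fun s => by
    refine ((hasDerivAt_exp_smul_const (-z) s).mul (hG s)).congr_deriv ?_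
    rw [mul_neg, neg_mul, ← mul_assoc, neg_add_cancel]
  have hconst := is_const_of_deriv_eq_zero (fun s => (hderiv s).differentiableAt)
      (fun s => (hderiv s).deriv) t 0
  simp only [zero_smul, exp_zero, one_mul] at hconst
  rw [← hconst, ← mul_assoc, smul_neg, ← exp_add_of_commute (Commute.refl _).neg_right,
    add_neg_cancel, exp_zero, one_mul]

theorem hasDerivAt_exp_smul_mul_exp_smul {x y : A} {D : ℝ} (h : x * y - y * x = D • y)
    {φ : ℝ → ℝ} {φ' t : ℝ} (hφ : HasDerivAt φ φ' t) :
    HasDerivAt (fun s => exp (s • x) * exp (φ s • y))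
      ((x + (φ' * Real.exp (t * D)) • y) * (exp (t • x) * exp (φ t • y))) t := by
  have hconj : exp (t • x) * y = Real.exp (t * D) • (y * exp (t • x)) :=
    exp_mul_eq_smul_mul_exp_of_mul_sub_mul_eq_smul
      (by rw [smul_mul_assoc, mul_smul_comm, ← smul_sub, h, smul_smul])
  refine ((hasDerivAt_exp_smul_const' x t).mul
    ((hasDerivAt_exp_smul_const' y (φ t)).scomp t hφ)).congr_deriv ?_
  simp only [Function.comp_apply]
  rw [mul_smul_comm, ← mul_assoc, hconj, smul_mul_assoc, smul_smul, mul_assoc, add_mul,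
    smul_mul_assoc, mul_comm φ', mul_assoc y]

end

/-- BCH formula for `[x, y] = D • y`, `D ≠ 0`:
`exp x * exp y = exp (x + (D/(1 - e^{-D})) • y)`,
i.e. `log (exp x * exp y) = x + (D/(1 - e^{-D})) • y`. -/
theorem stmt_1 {A : Type*} [NormedRing A] [NormedAlgebra ℝ A] [CompleteSpace A]
    (x y : A) (D : ℝ) (hD : D ≠ 0) (h : x * y - y * x = D • y) :
    NormedSpace.exp x * NormedSpace.exp y =
      NormedSpace.exp (x + (D / (1 - Real.exp (-D))) • y) := by
  set c := D / (1 - Real.exp (-D))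
  have hden : 1 - Real.exp (-D) ≠ 0 := by
    rwa [sub_ne_zero, ne_comm, Ne, Real.exp_eq_one_iff, neg_eq_zero]
  let φ : ℝ → ℝ := fun t => c / D * (1 - Real.exp (-(t * D)))
  have hφ : ∀ t, HasDerivAt φ (c * Real.exp (-(t * D))) t := fun t => by
    refine ((((hasDerivAt_mul_const D).neg.exp).const_sub 1).const_mul (c / D)).congr_deriv ?_
    change c / D * -(Real.exp (-(t * D)) * -D) = _
    field_simp
  have hG : ∀ t, HasDerivAt (fun s => exp (s • x) * exp (φ s • y))
      ((x + c • y) * (exp (t • x) * exp (φ t • y))) t := fun t => by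
    convert hasDerivAt_exp_smul_mul_exp_smul h (hφ t) using 4
    rw [mul_assoc, ← Real.exp_add, neg_add_cancel, Real.exp_zero, mul_one]
  have h1 := eq_exp_smul_mul_of_hasDerivAt_mul hG 1
  have hφ0 : φ 0 = 0 := by simp [φ]
  have hφ1 : φ 1 = 1 := by simp only [φ, one_mul, c]; field_simp
  simpa [hφ0, hφ1] using h1
end

section
/- Let μ be a finite measure on ℝ with all moments finite, and define Z_N = ∫ ∏_{i=1}^N dμ(x_i) ∏_{i<j}(x_i − x_j)² and P_N(x) = (1/Z_N) ∫ ∏_{i=1}^N dμ(x_i) ∏_i (x − x_i) ∏_{i<j}(x_i − x_j)². Then ∫ dμ(x) P_N(x) x^M = 0 for all integers 0 ≤ M ≤ N−1, and ∫ dμ(x) P_N(x) x^N = Z_{N+1}/((N+1)·Z_N). -/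
/-!
Write `Δ(z) = ∏_{i<j} (z_j - z_i)` for the Vandermonde determinant. For `z ∈ ℝ^{N+1}` let `D_M(z)`
be the determinant of the Vandermonde matrix of `z` with its last column `(z_i^N)` replaced by
`(z_i^M)`. Expanding `D_M` along that column and moving `z_i` to the front of `Δ(z)` gives
`Δ(z) D_M(z) = ∑_i z_i^M ∏_{j ≠ i} (z_i - z_j) Δ(z_{≠i})²`. All `N + 1` terms have the same integral
against `μ^{N+1}`, namely `∫ x^M ∏_j (x - y_j) Δ(y)² dμ(x) dμ^N(y) = Z_N ∫ P_N(x) x^M dμ(x)`.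
On the other hand `D_M` has two equal columns when `M < N`, and `D_N = Δ`, which integrates
against `Δ` to `Z_{N+1}`.
-/

open Finset Matrix MeasureTheory

namespace Matrix

variable {R : Type*} [CommRing R] {n : ℕ}

theorem prod_ite_sq_eq_det_vandermonde_sq (v : Fin n → R) :
    (∏ i, ∏ j, if i < j then (v i - v j) ^ 2 else 1) = (vandermonde v).det ^ 2 := by
  rw [det_vandermonde, ← prod_pow]
  refine prod_congr rfl fun i _ => ?_
  rw [← prod_pow, ← prod_filter]
  exact prod_congr (by ext; simp) fun _ _ => by ring

theorem det_vandermonde_cons (x : R) (y : Fin n → R) :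
    (vandermonde (Fin.cons x y : Fin (n + 1) → R)).det =
      (∏ j, (y j - x)) * (vandermonde y).det := by
  simp only [det_vandermonde, Fin.prod_univ_succ, Fin.prod_Ioi_zero, Fin.prod_Ioi_succ,
    Fin.cons_zero, Fin.cons_succ]

theorem det_vandermonde_comp_perm (v : Fin n → R) (σ : Equiv.Perm (Fin n)) :
    (vandermonde (v ∘ σ)).det = σ.sign * (vandermonde v).det :=
  det_permute σ (vandermonde v)

theorem det_vandermonde_insertNth (i : Fin (n + 1)) (x : R) (y : Fin n → R) :
    (vandermonde (i.insertNth x y)).det =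
      (-1) ^ ((i : ℕ) + n) * (∏ j, (x - y j)) * (vandermonde y).det := by
  have hprod : ∏ j, (y j - x) = (-1) ^ n * ∏ j, (x - y j) := by
    simpa using prod_neg (s := univ) fun j => x - y j
  rw [← Fin.cons_comp_cycleRange, det_vandermonde_comp_perm, Fin.sign_cycleRange,
    det_vandermonde_cons, hprod, pow_add]
  push_cast
  ring

theorem det_updateCol_vandermonde_last (v c : Fin (n + 1) → R) :
    (updateCol (vandermonde v) (Fin.last n) c).det =
      ∑ i : Fin (n + 1), (-1) ^ ((i : ℕ) + n) * c i * (vandermonde (i.removeNth v)).det := by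
  rw [det_succ_column _ (Fin.last n)]
  refine sum_congr rfl fun i _ => ?_
  rw [updateCol_self, submatrix_updateCol_succAbove, Fin.succAbove_last]
  rfl

theorem det_vandermonde_mul_det_updateCol_last (v : Fin (n + 1) → R) (M : ℕ) :
    (vandermonde v).det * (updateCol (vandermonde v) (Fin.last n) fun i => v i ^ M).det =
      ∑ i, (∏ j, (v i - i.removeNth v j)) * (vandermonde (i.removeNth v)).det ^ 2 * v i ^ M := by
  rw [det_updateCol_vandermonde_last, mul_sum]
  refine sum_congr rfl fun i _ => ?_
  have hv := det_vandermonde_insertNth i (v i) (i.removeNth v)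
  rw [Fin.insertNth_self_removeNth] at hv
  have hsign : ((-1 : R) ^ ((i : ℕ) + n)) ^ 2 = 1 := by rw [← pow_mul, pow_mul']; norm_num
  rw [hv]
  linear_combination
    (∏ j, (v i - i.removeNth v j)) * (vandermonde (i.removeNth v)).det ^ 2 * v i ^ M * hsign

theorem det_updateCol_vandermonde_last_pow_of_lt (v : Fin (n + 1) → R) {M : ℕ} (hM : M < n) :
    (updateCol (vandermonde v) (Fin.last n) fun i => v i ^ M).det = 0 :=
  det_updateCol_eq_zero (i := Fin.castSucc ⟨M, hM⟩) (Fin.castSucc_lt_last _).ne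

theorem updateCol_vandermonde_last_pow_self (v : Fin (n + 1) → R) :
    (updateCol (vandermonde v) (Fin.last n) fun i => v i ^ n) = vandermonde v :=
  updateCol_eq_self (vandermonde v) (Fin.last n)

end Matrix

noncomputable def mvPolynomialFunctions (ι : Type*) : Subalgebra ℝ ((ι → ℝ) → ℝ) :=
  (MvPolynomial.aeval fun i (z : ι → ℝ) => z i).range

namespace mvPolynomialFunctions

variable {ι : Type*}

theorem apply_mem (i : ι) : (fun z : ι → ℝ => z i) ∈ mvPolynomialFunctions ι :=
  ⟨MvPolynomial.X i, MvPolynomial.aeval_X _ _⟩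

theorem det_vandermonde_comp_mem {m : ℕ} (f : Fin m → ι) :
    (fun z : ι → ℝ => (vandermonde (z ∘ f)).det) ∈ mvPolynomialFunctions ι := by
  simp only [det_vandermonde, Function.comp_apply, ← prod_fn]
  exact prod_mem fun i _ => prod_mem fun j _ => sub_mem (apply_mem _) (apply_mem _)

theorem integrable [Fintype ι] {μ : ι → Measure ℝ} [∀ i, SigmaFinite (μ i)]
    (hmom : ∀ i (k : ℕ), Integrable (fun x : ℝ => x ^ k) (μ i)) {f : (ι → ℝ) → ℝ}
    (hf : f ∈ mvPolynomialFunctions ι) : Integrable f (Measure.pi μ) := by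
  obtain ⟨p, rfl⟩ := (AlgHom.mem_range _).mp hf
  clear hf
  induction p using MvPolynomial.induction_on' with
  | monomial u a =>
    have hmono : MvPolynomial.aeval (fun i (z : ι → ℝ) => z i) (MvPolynomial.monomial u a) =
        fun z => a * ∏ i, z i ^ u i := by
      ext z
      simp [MvPolynomial.aeval_monomial, Finsupp.prod_fintype]
    rw [hmono]
    exact (Integrable.fintype_prod fun i => hmom i (u i)).const_mul a
  | add p q hp hq => rw [map_add]; exact hp.add hq

end mvPolynomialFunctions

namespace MeasureTheory

theorem integral_sum_removeNth {α E : Type*} [MeasurableSpace α] [NormedAddCommGroup E]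
    [NormedSpace ℝ E] (μ : Measure α) [SigmaFinite μ] {n : ℕ} {G : α × (Fin n → α) → E}
    (hG : Integrable G (μ.prod (Measure.pi fun _ => μ))) :
    ∫ z, ∑ i : Fin (n + 1), G (z i, i.removeNth z) ∂(Measure.pi fun _ => μ) =
      (n + 1 : ℝ) • ∫ p, G p ∂(μ.prod (Measure.pi fun _ => μ)) := by
  have hmp (i : Fin (n + 1)) := measurePreserving_piFinSuccAbove (fun _ => μ) i
  have hterm (i : Fin (n + 1)) :
      ∫ z, G (z i, i.removeNth z) ∂(Measure.pi fun _ => μ) =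
        ∫ p, G p ∂(μ.prod (Measure.pi fun _ => μ)) :=
    (hmp i).integral_comp' (f := MeasurableEquiv.piFinSuccAbove _ i) G
  have hint (i : Fin (n + 1)) :
      Integrable (fun z => G (z i, i.removeNth z)) (Measure.pi fun _ => μ) :=
    (hmp i).integrable_comp_emb (MeasurableEquiv.measurableEmbedding _) |>.mpr hG
  rw [integral_finsetSum univ fun i _ => hint i, sum_congr rfl fun i _ => hterm i, sum_const,
    card_univ, Fintype.card_fin, ← Nat.cast_smul_eq_nsmul ℝ, Nat.cast_succ]

end MeasureTheory

noncomputable def heineIntegrand {n : ℕ} (M : ℕ) (p : ℝ × (Fin n → ℝ)) : ℝ :=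
  (∏ j, (p.1 - p.2 j)) * (vandermonde p.2).det ^ 2 * p.1 ^ M

theorem integrable_heineIntegrand (μ : Measure ℝ) [SigmaFinite μ]
    (hmom : ∀ k : ℕ, Integrable (fun x : ℝ => x ^ k) μ) (n M : ℕ) :
    Integrable (heineIntegrand (n := n) M) (μ.prod (Measure.pi fun _ => μ)) := by
  rw [← (measurePreserving_piFinSuccAbove (fun _ => μ) 0).integrable_comp_emb
    (MeasurableEquiv.measurableEmbedding _)]
  refine mvPolynomialFunctions.integrable (fun _ => hmom) ?_
  open mvPolynomialFunctions in
  refine mul_mem (mul_mem ?_ (pow_mem (det_vandermonde_comp_mem _) 2)) (pow_mem (apply_mem 0) M)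
  simp only [← prod_fn]
  exact prod_mem fun j _ => sub_mem (apply_mem _) (apply_mem _)

theorem integral_heine_mul_pow (μ : Measure ℝ) [SigmaFinite μ]
    (hmom : ∀ k : ℕ, Integrable (fun x : ℝ => x ^ k) μ) (n M : ℕ) :
    (n + 1) * ∫ x, (∫ y : Fin n → ℝ, (∏ j, (x - y j)) * (vandermonde y).det ^ 2
        ∂(Measure.pi fun _ => μ)) * x ^ M ∂μ =
      ∫ z, (vandermonde z).det * (updateCol (vandermonde z) (Fin.last n) fun i => z i ^ M).det
        ∂(Measure.pi fun _ => μ) := by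
  have hG := integrable_heineIntegrand μ hmom n M
  calc _ = (n + 1 : ℝ) • ∫ p, heineIntegrand M p ∂(μ.prod (Measure.pi fun _ => μ)) := by
        rw [integral_prod _ hG, smul_eq_mul]
        simp only [heineIntegrand, integral_mul_const]
    _ = _ := by
        rw [← integral_sum_removeNth μ hG]
        simp only [heineIntegrand, det_vandermonde_mul_det_updateCol_last]

open MeasureTheory in
theorem stmt_13_general (μ : Measure ℝ) [IsFiniteMeasure μ]
    (hmom : ∀ k : ℕ, MeasureTheory.Integrable (fun x : ℝ => x ^ k) μ)
    (N : ℕ) (Z : ℕ → ℝ) (P : ℝ → ℝ)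
    (hZ : ∀ n, Z n = ∫ x : Fin n → ℝ,
        (∏ i : Fin n, ∏ j : Fin n, if i < j then (x i - x j) ^ 2 else 1)
        ∂(Measure.pi fun _ => μ))
    (hP : ∀ x : ℝ, P x = (Z N)⁻¹ * ∫ y : Fin N → ℝ,
        (∏ i : Fin N, (x - y i)) *
          (∏ i : Fin N, ∏ j : Fin N, if i < j then (y i - y j) ^ 2 else 1)
        ∂(Measure.pi fun _ => μ)) :
    (∀ M : ℕ, M < N → ∫ x : ℝ, P x * x ^ M ∂μ = 0) ∧
      (∫ x : ℝ, P x * x ^ N ∂μ) = Z (N + 1) / ((N + 1) * Z N) := by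
  have hmoment (M : ℕ) : ∫ x, P x * x ^ M ∂μ = (Z N)⁻¹ * (N + 1 : ℝ)⁻¹ *
      ∫ z, (vandermonde z).det * (updateCol (vandermonde z) (Fin.last N) fun i => z i ^ M).det
        ∂(Measure.pi fun _ => μ) := by
    rw [← integral_heine_mul_pow μ hmom, ← mul_assoc, inv_mul_cancel_right₀ (by positivity),
      ← integral_const_mul]
    simp_rw [hP, prod_ite_sq_eq_det_vandermonde_sq, mul_assoc]
  refine ⟨fun M hM => ?_, ?_⟩
  · simp [hmoment, det_updateCol_vandermonde_last_pow_of_lt _ hM]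
  · rw [hmoment, hZ (N + 1)]
    simp_rw [updateCol_vandermonde_last_pow_self, prod_ite_sq_eq_det_vandermonde_sq, ← sq]
    rw [div_eq_mul_inv, mul_inv]
    ring

open MeasureTheory in
/-- Heine's formula: with `Z n = ∫ ∏_{i<j}(x_i−x_j)² dμ^n` and
`P_N(x) = (1/Z_N) ∫ ∏_i (x−y_i) ∏_{i<j}(y_i−y_j)² dμ^N`, one has
`∫ P_N(x) x^M dμ = 0` for `0 ≤ M ≤ N−1` and
`∫ P_N(x) x^N dμ = Z_{N+1}/((N+1)·Z_N)`. -/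
theorem stmt_13 (μ : Measure ℝ) [IsFiniteMeasure μ]
    (hmom : ∀ k : ℕ, MeasureTheory.Integrable (fun x : ℝ => x ^ k) μ)
    (N : ℕ) (Z : ℕ → ℝ) (P : ℝ → ℝ)
    (hZ : ∀ n, Z n = ∫ x : Fin n → ℝ,
        (∏ i : Fin n, ∏ j : Fin n, if i < j then (x i - x j) ^ 2 else 1)
        ∂(Measure.pi fun _ => μ))
    (hZN : Z N ≠ 0)
    (hP : ∀ x : ℝ, P x = (Z N)⁻¹ * ∫ y : Fin N → ℝ,
        (∏ i : Fin N, (x - y i)) *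
          (∏ i : Fin N, ∏ j : Fin N, if i < j then (y i - y j) ^ 2 else 1)
        ∂(Measure.pi fun _ => μ)) :
    (∀ M : ℕ, M < N → ∫ x : ℝ, P x * x ^ M ∂μ = 0) ∧
      (∫ x : ℝ, P x * x ^ N ∂μ) = Z (N + 1) / ((N + 1) * Z N) :=
  stmt_13_general μ hmom N Z P hZ hP
end

section
/- With notation as above (Z_N the N-fold squared-Vandermonde integral against dμ, with Z_0 = 1 and Z_1 = μ(ℝ) = ∫dμ, and K_N = Z_{N+1}/((N+1) Z_N) the squared norm ∫dμ P_N² of the monic orthogonal polynomial), one has Z_N = N! ∏_{i=0}^{N−1} k_i, where k_i = ∫ dμ(x) P_i(x)² is the norm of the i-th monic orthogonal polynomial. -/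
open MeasureTheory in
/-- `Z_N = N! ∏_{i=0}^{N−1} k_i` where `Z_N` is the `N`-fold squared-Vandermonde
integral against `dμ`, `P_i` the monic orthogonal polynomials of `μ`, and
`k_i = ∫ P_i² dμ`; `μ` is a finite measure with all moments finite and
infinite support. -/
theorem stmt_14 (μ : Measure ℝ) [IsFiniteMeasure μ]
    (hmom : ∀ k : ℕ, MeasureTheory.Integrable (fun x : ℝ => x ^ k) μ)
    (hsupp : ∀ s : Finset ℝ, μ ((↑s : Set ℝ)ᶜ) ≠ 0)
    (P : ℕ → Polynomial ℝ)
    (hmonic : ∀ n, (P n).Monic) (hdeg : ∀ n, (P n).natDegree = n)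
    (horth : ∀ m n, m ≠ n → ∫ x : ℝ, (P m).eval x * (P n).eval x ∂μ = 0)
    (N : ℕ) (Z : ℕ → ℝ)
    (hZ : ∀ n, Z n = ∫ x : Fin n → ℝ,
        (∏ i : Fin n, ∏ j : Fin n, if i < j then (x i - x j) ^ 2 else 1)
        ∂(Measure.pi fun _ => μ)) :
    Z N = (N.factorial : ℝ) * ∏ i ∈ Finset.range N, ∫ x : ℝ, ((P i).eval x) ^ 2 ∂μ := by
  letI : MeasureSpace ℝ := ⟨μ⟩
  have hpoly : ∀ p : Polynomial ℝ, Integrable (fun x : ℝ => p.eval x) μ := by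
    intro p
    have h : (fun x : ℝ => p.eval x)
        = fun x => ∑ k ∈ Finset.range (p.natDegree + 1), p.coeff k * x ^ k := by
      funext x; rw [Polynomial.eval_eq_sum_range]
    rw [h]
    exact integrable_finset_sum _ fun k _ => (hmom k).const_mul _
  -- pointwise identity for the integrand
  have key : ∀ x : Fin N → ℝ,
      (∏ i : Fin N, ∏ j : Fin N, if i < j then (x i - x j) ^ 2 else 1)
      = ∑ σ : Equiv.Perm (Fin N), ∑ τ : Equiv.Perm (Fin N),
          (((Equiv.Perm.sign σ : ℤ) : ℝ) * ((Equiv.Perm.sign τ : ℤ) : ℝ)) *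
          ∏ i : Fin N, (P (σ i) * P (τ i)).eval (x i) := by
    intro x
    have h1 : (∏ i : Fin N, ∏ j : Fin N, if i < j then (x i - x j) ^ 2 else 1)
        = ((Matrix.vandermonde x).det) ^ 2 := by
      rw [Matrix.det_vandermonde, ← Finset.prod_pow]
      refine Finset.prod_congr rfl fun i _ => ?_
      rw [← Finset.prod_pow,
        show (∏ j : Fin N, if i < j then (x i - x j) ^ 2 else 1)
          = ∏ j ∈ Finset.filter (fun j => i < j) Finset.univ, (x i - x j) ^ 2
          from (Finset.prod_filter _ _).symm,
        show Finset.filter (fun j => i < j) Finset.univ = Finset.Ioi i by ext j; simp]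
      refine Finset.prod_congr rfl fun j _ => ?_
      ring
    have h2 : (Matrix.vandermonde x).det
        = ∑ σ : Equiv.Perm (Fin N), ((Equiv.Perm.sign σ : ℤ) : ℝ)
            * ∏ i : Fin N, (P (σ i)).eval (x i) := by
      rw [Matrix.det_eval_matrixOfPolynomials_eq_det_vandermonde x (fun j => P j)
        (fun i => hdeg i) (fun i => hmonic i), ← Matrix.det_transpose, Matrix.det_apply']
      rfl
    rw [h1, h2, sq, Finset.sum_mul_sum]
    refine Finset.sum_congr rfl fun σ _ => Finset.sum_congr rfl fun τ _ => ?_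
    rw [mul_mul_mul_comm, ← Finset.prod_mul_distrib]
    congr 1
    exact Finset.prod_congr rfl fun i _ => (Polynomial.eval_mul ..).symm
  have hvol : (Measure.pi fun _ : Fin N => μ) = (volume : Measure (Fin N → ℝ)) := rfl
  have hint : ∀ σ τ : Equiv.Perm (Fin N),
      Integrable (fun x : Fin N → ℝ => ∏ i : Fin N, (P (σ i) * P (τ i)).eval (x i))
        (volume : Measure (Fin N → ℝ)) :=
    fun σ τ => Integrable.fintype_prod (f := fun i t => (P (σ i) * P (τ i)).eval t)
      (fun i => hpoly _)
  rw [hZ]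
  simp_rw [key, hvol]
  rw [integral_finset_sum _ (fun σ _ => integrable_finset_sum _ fun τ _ =>
    (hint σ τ).const_mul _)]
  have hterm : ∀ σ τ : Equiv.Perm (Fin N),
      ∫ x : Fin N → ℝ,
        (((Equiv.Perm.sign σ : ℤ) : ℝ) * ((Equiv.Perm.sign τ : ℤ) : ℝ))
          * ∏ i : Fin N, (P (σ i) * P (τ i)).eval (x i)
      = (((Equiv.Perm.sign σ : ℤ) : ℝ) * ((Equiv.Perm.sign τ : ℤ) : ℝ))
          * ∏ i : Fin N, ∫ t : ℝ, (P (σ i) * P (τ i)).eval t ∂μ := by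
    intro σ τ
    rw [MeasureTheory.integral_const_mul, integral_fintype_prod_volume_eq_prod (ι := Fin N)
      (fun i t => (P (σ i) * P (τ i)).eval t)]
    rfl
  have hdiag : ∀ σ : Equiv.Perm (Fin N),
      (∑ τ : Equiv.Perm (Fin N), ∫ x : Fin N → ℝ,
        (((Equiv.Perm.sign σ : ℤ) : ℝ) * ((Equiv.Perm.sign τ : ℤ) : ℝ))
          * ∏ i : Fin N, (P (σ i) * P (τ i)).eval (x i))
      = ∏ i ∈ Finset.range N, ∫ x : ℝ, ((P i).eval x) ^ 2 ∂μ := by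
    intro σ
    rw [Finset.sum_eq_single σ]
    · rw [hterm]
      have hsgn : ((Equiv.Perm.sign σ : ℤ) : ℝ) * ((Equiv.Perm.sign σ : ℤ) : ℝ) = 1 := by
        rw [← Int.cast_mul, ← Units.val_mul, Int.units_mul_self]; norm_num
      rw [hsgn, one_mul]
      have : ∀ i : Fin N, (∫ t : ℝ, (P (σ i) * P (σ i)).eval t ∂μ)
          = (fun j : Fin N => ∫ x : ℝ, ((P (j : ℕ)).eval x) ^ 2 ∂μ) (σ i) := by
        intro i; simp [sq]
      rw [Finset.prod_congr rfl fun i _ => this i,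
        Equiv.prod_comp σ (fun j : Fin N => ∫ x : ℝ, ((P (j : ℕ)).eval x) ^ 2 ∂μ),
        ← Fin.prod_univ_eq_prod_range]
    · intro τ _ hτ
      rw [hterm]
      obtain ⟨i, hi⟩ : ∃ i, σ i ≠ τ i := by
        by_contra h
        push_neg at h
        exact hτ (Equiv.ext h).symm
      have : (∫ t : ℝ, (P (σ i) * P (τ i)).eval t ∂μ) = 0 := by
        have := horth (σ i) (τ i) (by exact_mod_cast fun h => hi (Fin.ext h))
        simpa using this
      rw [Finset.prod_eq_zero (Finset.mem_univ i) this, mul_zero]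
    · intro h; exact absurd (Finset.mem_univ σ) h
  rw [Finset.sum_congr rfl fun σ _ => integral_finset_sum _ (fun τ _ => (hint σ τ).const_mul _),
    Finset.sum_congr rfl fun σ _ => hdiag σ, Finset.sum_const, Finset.card_univ,
    Fintype.card_perm, Fintype.card_fin, nsmul_eq_mul]
end
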